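/- arXiv:2110.09738 — 3 statements merged into one kernel-verified Lean document; each statement's English description precedes it below -/
import Mathlib

section
/- If f is L-smooth and convex on a compact convex set C of diameter D, and the Frank-Wolfe iterates are defined by x_{k+1} = x_k + γ_k (s_k - x_k) with s_k ∈ argmin_{s∈C} ⟨∇f(x_k), s⟩ and step size γ_k = 2/(k+2), then for all k ≥ 1, f(x_k) - f(x*) ≤ 2LD²/(k+2), where x* is a minimizer of f over C. -/
open scoped RealInnerProductSpace

/-! For the gap `h k = f (x k) - f x*`, smoothness at `x k`, the minimality of `s k` for the
linearization and the first-order convexity bound `⟪∇f (x k), x* - x k⟫ ≤ f x* - f (x k)` give the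
contraction `h (k+1) ≤ (1 - γ k) h k + γ k ^ 2 L D² / 2`. With `γ k = 2 / (k + 2)` this recursion
yields `h k ≤ 2 L D² / (k + 2)` by induction, since `(k + 1) (k + 3) ≤ (k + 2)²`. -/

section FrankWolfe

variable {E : Type*} [NormedAddCommGroup E] [InnerProductSpace ℝ E] [CompleteSpace E]
  {C : Set E} {f : E → ℝ}

theorem ConvexOn.inner_gradient_le_sub {g a b : E} (hf : ConvexOn ℝ C f)
    (hg : HasGradientAt f g a) (ha : a ∈ C) (hb : b ∈ C) : ⟪g, b - a⟫ ≤ f b - f a := by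
  have hline : HasDerivAt (f ∘ AffineMap.lineMap (k := ℝ) a b) ⟪g, b - a⟫ 0 := by
    simpa using hg.hasFDerivAt.comp_hasDerivAt_of_eq (0 : ℝ) AffineMap.hasDerivAt_lineMap
      (AffineMap.lineMap_apply_zero a b).symm
  have hslope := (hf.comp_affineMap (AffineMap.lineMap a b)).le_slope_of_hasDerivAt
    (x := 0) (y := 1) (by simpa using ha) (by simpa using hb) zero_lt_one hline
  simpa [slope_def_field] using hslope

variable {f' : E → E} {L : ℝ}

theorem ConvexOn.frankWolfe_step_le {D γ : ℝ} {a s z : E} (hf : ConvexOn ℝ C f)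
    (hg : HasGradientAt f (f' a) a)
    (hsmooth : ∀ x ∈ C, ∀ y ∈ C, f y ≤ f x + ⟪f' x, y - x⟫ + L / 2 * ‖y - x‖ ^ 2)
    (ha : a ∈ C) (hs : s ∈ C) (hs_min : ∀ t ∈ C, ⟪f' a, s⟫ ≤ ⟪f' a, t⟫) (hz : z ∈ C)
    (hγ : γ ∈ Set.Icc (0 : ℝ) 1) (hL : 0 ≤ L) (hsD : ‖s - a‖ ≤ D) :
    f (a + γ • (s - a)) - f z ≤ (1 - γ) * (f a - f z) + γ ^ 2 * (L * D ^ 2 / 2) := by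
  have hdescent : f (a + γ • (s - a)) ≤ f a + γ * ⟪f' a, s - a⟫ + L / 2 * (γ * ‖s - a‖) ^ 2 := by
    have := hsmooth a ha _ (hf.1.add_smul_sub_mem ha hs hγ)
    rwa [add_sub_cancel_left, inner_smul_right, norm_smul, Real.norm_of_nonneg hγ.1] at this
  have hgap : ⟪f' a, s - a⟫ ≤ f z - f a := calc
    ⟪f' a, s - a⟫ ≤ ⟪f' a, z - a⟫ := by
      simp only [inner_sub_right]
      linarith [hs_min z hz]
    _ ≤ f z - f a := hf.inner_gradient_le_sub hg ha hz
  have hquad : L / 2 * (γ * ‖s - a‖) ^ 2 ≤ γ ^ 2 * (L * D ^ 2 / 2) := by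
    have : (γ * ‖s - a‖) ^ 2 ≤ (γ * D) ^ 2 := by
      gcongr
      · exact mul_nonneg hγ.1 (norm_nonneg _)
      · exact hγ.1
    nlinarith
  nlinarith [mul_le_mul_of_nonneg_left hgap hγ.1]

theorem ConvexOn.subsingleton_of_le_quadratic_of_neg (hf : ConvexOn ℝ C f)
    (hgrad : ∀ x ∈ C, HasGradientAt f (f' x) x)
    (hsmooth : ∀ x ∈ C, ∀ y ∈ C, f y ≤ f x + ⟪f' x, y - x⟫ + L / 2 * ‖y - x‖ ^ 2)
    (hL : L < 0) : C.Subsingleton := by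
  intro a ha b hb
  have hquad : 0 ≤ L / 2 * ‖b - a‖ ^ 2 := by
    linarith [hsmooth a ha b hb, hf.inner_gradient_le_sub (hgrad a ha) ha hb]
  have : ‖b - a‖ ^ 2 = 0 := by nlinarith [sq_nonneg ‖b - a‖]
  simpa [sub_eq_zero, eq_comm] using this

end FrankWolfe

theorem Convex.frankWolfe_iterate_mem {E : Type*} [AddCommGroup E] [Module ℝ E] {C : Set E}
    (hC : Convex ℝ C) {x s : ℕ → E} {γ : ℕ → ℝ} (hx0 : x 0 ∈ C) (hs : ∀ k, s k ∈ C)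
    (hγ : ∀ k, γ k ∈ Set.Icc (0 : ℝ) 1) (hupd : ∀ k, x (k + 1) = x k + γ k • (s k - x k)) :
    ∀ k, x k ∈ C
  | 0 => hx0
  | k + 1 => hupd k ▸ hC.add_smul_sub_mem (hC.frankWolfe_iterate_mem hx0 hs hγ hupd k) (hs k) (hγ k)

theorem two_div_add_two_mem_Icc (k : ℕ) : 2 / (k + 2 : ℝ) ∈ Set.Icc 0 1 :=
  ⟨by positivity, by rw [div_le_one (by positivity)]; linarith [k.cast_nonneg (α := ℝ)]⟩

theorem le_of_frankWolfe_recursion {e : ℕ → ℝ} {M : ℝ} (hM : 0 ≤ M)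
    (he : ∀ k : ℕ, e (k + 1) ≤ (1 - 2 / (k + 2 : ℝ)) * e k + (2 / (k + 2 : ℝ)) ^ 2 * (M / 2)) :
    ∀ k : ℕ, 1 ≤ k → e k ≤ 2 * M / (k + 2 : ℝ) := by
  intro k hk
  induction k, hk using Nat.le_induction with
  | base => linarith [he 0]
  | succ m hm ih =>
    calc e (m + 1) ≤ (1 - 2 / (m + 2 : ℝ)) * e m + (2 / (m + 2 : ℝ)) ^ 2 * (M / 2) := he m
      _ ≤ (1 - 2 / (m + 2 : ℝ)) * (2 * M / (m + 2)) + (2 / (m + 2 : ℝ)) ^ 2 * (M / 2) := by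
        gcongr
        linarith [(two_div_add_two_mem_Icc m).2]
      _ = 2 * M * (m + 1) / (m + 2) ^ 2 := by field_simp; ring
      _ ≤ 2 * M / ((m + 1 : ℕ) + 2 : ℝ) := by
        rw [div_le_div_iff₀ (by positivity) (by positivity)]
        push_cast
        nlinarith

theorem fw_convergence_general {n : ℕ} (C : Set (EuclideanSpace ℝ (Fin n)))
    (hCcomp : IsCompact C) (hCconv : Convex ℝ C)
    (f : EuclideanSpace ℝ (Fin n) → ℝ) (f' : EuclideanSpace ℝ (Fin n) → EuclideanSpace ℝ (Fin n))
    (L D : ℝ)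
    (hD : D = Metric.diam C)
    (hgrad : ∀ x, HasGradientAt f (f' x) x)
    (hconv : ConvexOn ℝ C f)
    (hsmooth : ∀ x ∈ C, ∀ y ∈ C,
      f y ≤ f x + ⟪f' x, y - x⟫ + L / 2 * ‖y - x‖ ^ 2)
    (x s : ℕ → EuclideanSpace ℝ (Fin n))
    (hx0 : x 0 ∈ C)
    (hs : ∀ k, s k ∈ C ∧ ∀ t ∈ C, ⟪f' (x k), s k⟫ ≤ ⟪f' (x k), t⟫)
    (hupd : ∀ k, x (k + 1) = x k + (2 / (k + 2 : ℝ)) • (s k - x k))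
    (xstar : EuclideanSpace ℝ (Fin n)) (hxstar : xstar ∈ C) :
    ∀ k : ℕ, 1 ≤ k → f (x k) - f xstar ≤ 2 * L * D ^ 2 / (k + 2 : ℝ) := by
  have hxC : ∀ k, x k ∈ C :=
    hCconv.frankWolfe_iterate_mem hx0 (fun k => (hs k).1) two_div_add_two_mem_Icc hupd
  rcases lt_or_ge L 0 with hL | hL
  · have hC : C.Subsingleton :=
      hconv.subsingleton_of_le_quadratic_of_neg (fun y _ => hgrad y) hsmooth hL
    intro k _
    rw [hC (hxC k) hxstar, hD, Metric.diam_subsingleton hC]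
    simp
  · have hsD : ∀ k, ‖s k - x k‖ ≤ D := fun k => by
      rw [hD, ← dist_eq_norm]
      exact Metric.dist_le_diam_of_mem hCcomp.isBounded (hs k).1 (hxC k)
    simp only [mul_assoc]
    refine le_of_frankWolfe_recursion (mul_nonneg hL (sq_nonneg D)) fun k => ?_
    rw [hupd k]
    exact hconv.frankWolfe_step_le (hgrad _) hsmooth (hxC k) (hs k).1 (hs k).2 hxstar
      (two_div_add_two_mem_Icc k) hL (hsD k)

/-- Frank-Wolfe convergence: `f(x_k) - f(x*) ≤ 2 L D² / (k+2)` for `k ≥ 1`. -/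
theorem fw_convergence {n : ℕ} (C : Set (EuclideanSpace ℝ (Fin n)))
    (hCne : C.Nonempty) (hCcomp : IsCompact C) (hCconv : Convex ℝ C)
    (f : EuclideanSpace ℝ (Fin n) → ℝ) (f' : EuclideanSpace ℝ (Fin n) → EuclideanSpace ℝ (Fin n))
    (L D : ℝ)
    (hD : D = Metric.diam C)
    (hgrad : ∀ x, HasGradientAt f (f' x) x)
    (hconv : ConvexOn ℝ C f)
    (hsmooth : ∀ x ∈ C, ∀ y ∈ C,
      f y ≤ f x + ⟪f' x, y - x⟫ + L / 2 * ‖y - x‖ ^ 2)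
    (x s : ℕ → EuclideanSpace ℝ (Fin n))
    (hx0 : x 0 ∈ C)
    (hs : ∀ k, s k ∈ C ∧ ∀ t ∈ C, ⟪f' (x k), s k⟫ ≤ ⟪f' (x k), t⟫)
    (hupd : ∀ k, x (k + 1) = x k + (2 / (k + 2 : ℝ)) • (s k - x k))
    (xstar : EuclideanSpace ℝ (Fin n)) (hxstar : xstar ∈ C)
    (hmin : ∀ y ∈ C, f xstar ≤ f y) :
    ∀ k : ℕ, 1 ≤ k → f (x k) - f xstar ≤ 2 * L * D ^ 2 / (k + 2 : ℝ) :=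
  fw_convergence_general C hCcomp hCconv f f' L D hD hgrad hconv hsmooth x s hx0 hs hupd xstar
    hxstar
end

section
/- For a single Frank-Wolfe step with step size γ ∈ [0,1] applied to an L-smooth function f over a compact convex set C of diameter D, the suboptimality satisfies f(x_{k+1}) - f(x*) ≤ (1-γ)(f(x_k) - f(x*)) + (γ²L/2)D². -/
open scoped RealInnerProductSpace

/-- One Frank-Wolfe step: `f(x_{k+1}) - f(x*) ≤ (1-γ)(f(x_k) - f(x*)) + (γ² L / 2) D²`. -/
theorem fw_one_step {n : ℕ} (C : Set (EuclideanSpace ℝ (Fin n)))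
    (hCcomp : IsCompact C) (hCconv : Convex ℝ C)
    (f : EuclideanSpace ℝ (Fin n) → ℝ) (f' : EuclideanSpace ℝ (Fin n) → EuclideanSpace ℝ (Fin n))
    (L D : ℝ) (hD : D = Metric.diam C)
    (hgrad : ∀ x, HasGradientAt f (f' x) x)
    (hconv : ConvexOn ℝ C f)
    (hconvgrad : ∀ x ∈ C, ∀ y ∈ C, f x + ⟪f' x, y - x⟫ ≤ f y)
    (hsmooth : ∀ x ∈ C, ∀ y ∈ C,
      f y ≤ f x + ⟪f' x, y - x⟫ + L / 2 * ‖y - x‖ ^ 2)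
    (xk sk xk1 xstar : EuclideanSpace ℝ (Fin n)) (γ : ℝ)
    (hγ : γ ∈ Set.Icc (0 : ℝ) 1)
    (hxk : xk ∈ C) (hskC : sk ∈ C)
    (hsk : ∀ t ∈ C, ⟪f' xk, sk⟫ ≤ ⟪f' xk, t⟫)
    (hupd : xk1 = xk + γ • (sk - xk))
    (hxstar : xstar ∈ C) (hmin : ∀ y ∈ C, f xstar ≤ f y) :
    f xk1 - f xstar ≤ (1 - γ) * (f xk - f xstar) + γ ^ 2 * L / 2 * D ^ 2 := by

  obtain ⟨hγ0, hγ1⟩ := hγ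
  have hxk1C : xk1 ∈ C := by
    rw [hupd]
    have := hCconv hxk hskC (by linarith : (0:ℝ) ≤ 1 - γ) hγ0 (by ring)
    convert this using 1
    module
  -- inner product term
  have hinner : ⟪f' xk, sk - xk⟫ ≤ f xstar - f xk := by
    have h1 := hsk xstar hxstar
    have h2 := hconvgrad xk hxk xstar hxstar
    have : ⟪f' xk, sk - xk⟫ ≤ ⟪f' xk, xstar - xk⟫ := by
      rw [inner_sub_right, inner_sub_right]; linarith
    linarith
  -- norm bound
  have hnormD : ‖sk - xk‖ ≤ D := by
    rw [hD]
    have := Metric.dist_le_diam_of_mem hCcomp.isBounded hskC hxk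
    rwa [dist_eq_norm] at this
  have hnorm0 : (0:ℝ) ≤ ‖sk - xk‖ := norm_nonneg _
  have hD0 : (0:ℝ) ≤ D := le_trans hnorm0 hnormD
  -- L nonneg if two distinct points exist
  have hLnn : ∀ x ∈ C, ∀ y ∈ C, x ≠ y → 0 ≤ L := by
    intro x hx y hy hxy
    have h1 := hconvgrad x hx y hy
    have h2 := hsmooth x hx y hy
    have hn : (0:ℝ) < ‖y - x‖ ^ 2 := by
      have h0 : (0:ℝ) < ‖y - x‖ := norm_pos_iff.mpr (sub_ne_zero.mpr (Ne.symm hxy))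
      positivity
    nlinarith
  have hnormL : L / 2 * ‖sk - xk‖ ^ 2 ≤ L / 2 * D ^ 2 := by
    rcases eq_or_ne sk xk with h | h
    · rcases eq_or_lt_of_le hD0 with hd | hd
      · simp [h, ← hd]
      · have hL : 0 ≤ L := by
          have : Metric.diam C ≠ 0 := by rw [← hD]; linarith
          obtain ⟨x, hx, y, hy, hxy⟩ : ∃ x ∈ C, ∃ y ∈ C, x ≠ y := by
            by_contra hc
            push_neg at hc
            apply this
            rcases Set.eq_empty_or_nonempty C with he | ⟨z, hz⟩
            · simp [he]
            · have : C = {z} := Set.eq_singleton_iff_unique_mem.mpr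
                ⟨hz, fun w hw => hc w hw z hz⟩
              simp [this]
          exact hLnn x hx y hy hxy
        have : ‖sk - xk‖ = 0 := by simp [h]
        rw [this]
        nlinarith [sq_nonneg D]
    · have hL : 0 ≤ L := hLnn sk hskC xk hxk h
      nlinarith [mul_self_le_mul_self hnorm0 hnormD]
  -- smoothness at the step
  have hs := hsmooth xk hxk xk1 hxk1C
  have hd : xk1 - xk = γ • (sk - xk) := by rw [hupd]; abel
  rw [hd, real_inner_smul_right, norm_smul, mul_pow, Real.norm_eq_abs,
    sq_abs] at hs
  have hfx : f xstar ≤ f xk := hmin xk hxk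
  nlinarith [sq_nonneg γ]
end

section
/- If a sequence of errors h_k = f(x_k) - f(x*) satisfies h_{k+1} ≤ (1 - 2/(k+2)) h_k + (2/(k+2))² (L D²/2) for all k ≥ 0, then h_k ≤ 2LD²/(k+2) for all k ≥ 1. -/
/-! With `γ = 2 / t`, one step of the recursion maps the bound `2C / t` to
`(1 - γ) · 2C / t + γ² C / 2 = 2C (t - 1) / t² ≤ 2C / (t + 1)`, since `(t - 1)(t + 1) ≤ t²`.
At `k = 0` the step size is `1`, so `h 1 ≤ C / 2` whatever `h 0` is, which starts the induction. -/

lemma frankWolfe_step_le {C t x : ℝ} (hC : 0 ≤ C) (ht : 2 ≤ t) (hx : x ≤ 2 * C / t) :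
    (1 - 2 / t) * x + (2 / t) ^ 2 * (C / 2) ≤ 2 * C / (t + 1) := by
  have ht0 : 0 < t := by linarith
  have hγ : 0 ≤ 1 - 2 / t := by rw [sub_nonneg, div_le_one ht0]; exact ht
  calc (1 - 2 / t) * x + (2 / t) ^ 2 * (C / 2)
      ≤ (1 - 2 / t) * (2 * C / t) + (2 / t) ^ 2 * (C / 2) := by gcongr
    _ = 2 * C * (t - 1) / t ^ 2 := by field_simp; ring
    _ ≤ 2 * C / (t + 1) := by
      rw [div_le_div_iff₀ (by positivity) (by positivity)]
      nlinarith

theorem fw_error_recursion_general (h : ℕ → ℝ) (L D : ℝ) (hL : 0 ≤ L)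
    (hrec : ∀ k : ℕ,
      h (k + 1) ≤ (1 - 2 / ((k : ℝ) + 2)) * h k + (2 / ((k : ℝ) + 2)) ^ 2 * (L * D ^ 2 / 2)) :
    ∀ k : ℕ, 1 ≤ k → h k ≤ 2 * L * D ^ 2 / ((k : ℝ) + 2) := by
  have hC : 0 ≤ L * D ^ 2 := by positivity
  intro k hk
  induction k, hk using Nat.le_induction with
  | base =>
    have h1 := hrec 0
    norm_num at h1 ⊢
    linarith
  | succ k _ ih =>
    rw [mul_assoc] at ih ⊢
    have hstep := frankWolfe_step_le hC (le_add_of_nonneg_left k.cast_nonneg) ih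
    calc h (k + 1) ≤ _ := hrec k
      _ ≤ _ := hstep
      _ = _ := by push_cast; ring

/-- The standard Frank-Wolfe error recursion implies the `O(1/k)` rate. -/
theorem fw_error_recursion (h : ℕ → ℝ) (L D : ℝ) (hL : 0 ≤ L) (hD : 0 ≤ D)
    (hnonneg : ∀ k, 0 ≤ h k)
    (hrec : ∀ k : ℕ,
      h (k + 1) ≤ (1 - 2 / ((k : ℝ) + 2)) * h k + (2 / ((k : ℝ) + 2)) ^ 2 * (L * D ^ 2 / 2)) :
    ∀ k : ℕ, 1 ≤ k → h k ≤ 2 * L * D ^ 2 / ((k : ℝ) + 2) :=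
  fw_error_recursion_general h L D hL hrec
end
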